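/- arXiv:2208.01027 — 2 statements merged into one kernel-verified Lean document; each statement's English description precedes it below -/
import Mathlib

section
/- Let R be a commutative Noetherian reduced algebra over an infinite field k, let I be an ideal of R, and let x ∈ I. Let \overline{R} denote the integral closure of R in its total ring of quotients. If for every maximal ideal m of \overline{R} the extension of \overline{I·\overline{R}_m} to \overline{R}_m/(x)\overline{R}_m equals the integral closure of the extension of I to \overline{R}_m/(x)\overline{R}_m, then the image of \overline{I} in R/(x) equals the integral closure of the image ideal I·(R/(x)). -/
/-!
Integral closure is read through the Rees algebra: `r ∈ Ī` iff `r X` is integral over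
`R[IX] ⊆ R[X]`. This makes `Ī` an ideal, and since `S[IS X]` is integral over `R[IX]` for an
integral extension `R ⊆ S`, it gives `(IS)‾ ∩ R = Ī`. Clearing denominators in an equation of
integral dependence shows that membership in `Ī` is local on the maximal ideals.

Now let `r` be integral over `I` modulo `x`. By persistence its image in each `R̄_m / (x)` is
integral over the image of `I`, so by hypothesis it agrees modulo `x ∈ I` with an element of
`(I R̄_m)‾`; hence `r ∈ (I R̄_m)‾` for every maximal `m` of `R̄`, so `r ∈ (I R̄)‾`, and `r ∈ Ī`.
-/

/-- The integral closure of an ideal `I` of a commutative ring `R`: the set of elements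
`r ∈ R` satisfying an equation `r ^ n + c 1 * r ^ (n-1) + ⋯ + c n = 0` with `c i ∈ I ^ i`
(here written as `r ^ n + ∑ i < n, c i * r ^ i = 0` with `c i ∈ I ^ (n - i)`). -/
def Ideal.intClosure {R : Type*} [CommRing R] (I : Ideal R) : Set R :=
  {r | ∃ n : ℕ, 0 < n ∧ ∃ c : ℕ → R, (∀ i < n, c i ∈ I ^ (n - i)) ∧
    r ^ n + ∑ i ∈ Finset.range n, c i * r ^ i = 0}

open Polynomial

lemma isIntegral_trans_of_subalgebra {R S B : Type*} [CommRing R] [CommRing S] [CommRing B]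
    [Algebra R B] [Algebra S B] (T : Subalgebra S B) (hT : ∀ t ∈ T, IsIntegral R t) {x : B}
    (hx : IsIntegral T x) : IsIntegral R x :=
  isIntegral_trans (A := integralClosure R B) x <|
    hx.map_of_comp_eq (ψ := RingHom.id B)
      (Subring.inclusion (S := T.toSubring) (T := (integralClosure R B).toSubring) hT) rfl

lemma mul_pow_add_sum_eq_pow_mul {R : Type*} [CommRing R] (n : ℕ) (e : ℕ → R) (t z : R) :
    (t * z) ^ n + ∑ i ∈ Finset.range n, e i * t ^ (n - i) * (t * z) ^ i =
      t ^ n * (z ^ n + ∑ i ∈ Finset.range n, e i * z ^ i) := by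
  rw [mul_add, Finset.mul_sum, mul_pow]
  congr 1
  refine Finset.sum_congr rfl fun i hi => ?_
  rw [mul_pow, ← pow_sub_mul_pow t (Finset.mem_range.mp hi).le]
  ring

lemma IsLocalization.exists_mul_eq_algebraMap_of_forall_mem_map {R S : Type*} [CommRing R]
    [CommRing S] [Algebra R S] (M : Submonoid R) [IsLocalization M S] (K : ℕ → Ideal R)
    (c : ℕ → S) (n : ℕ) (hc : ∀ i < n, c i ∈ (K i).map (algebraMap R S)) :
    ∃ s ∈ M, ∀ i < n, ∃ a ∈ K i, algebraMap R S s * c i = algebraMap R S a := by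
  induction n with
  | zero => exact ⟨1, M.one_mem, fun i hi => absurd hi i.not_lt_zero⟩
  | succ n ih =>
    obtain ⟨s, hs, ha⟩ := ih fun i hi => hc i (hi.trans n.lt_succ_self)
    obtain ⟨⟨⟨d, hd⟩, ⟨t, ht⟩⟩, hdt⟩ :=
      (IsLocalization.mem_map_algebraMap_iff M S).mp (hc n n.lt_succ_self)
    refine ⟨s * t, M.mul_mem hs ht, fun i hi => ?_⟩
    rcases (Nat.lt_succ_iff_lt_or_eq.mp hi) with hi | rfl
    · obtain ⟨a, haK, hac⟩ := ha i hi
      exact ⟨a * t, (K i).mul_mem_right t haK, by rw [map_mul, map_mul, ← hac]; ring⟩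
    · exact ⟨s * d, (K i).mul_mem_left s hd, by rw [map_mul, map_mul, ← hdt]; ring⟩

namespace Ideal

section ReesAlgebra

variable {R : Type*} [CommRing R] (I : Ideal R)

lemma isIntegral_monomial_of_mem_intClosure {r : R} (hr : r ∈ I.intClosure) :
    IsIntegral (reesAlgebra I) (monomial 1 r) := by
  obtain ⟨n, -, c, hc, heq⟩ := hr
  have hmem (i : ℕ) : monomial (n - i) (c i) ∈ reesAlgebra I := by
    refine reesAlgebra.monomial_mem.mpr ?_
    rcases lt_or_ge i n with hi | hi
    · exact hc i hi
    · simp [Nat.sub_eq_zero_of_le hi]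
  refine ⟨X ^ n + ∑ i ∈ Finset.range n, C ⟨_, hmem i⟩ * X ^ i,
    monic_X_pow_add (by simp_rw [← Fin.sum_univ_eq_sum_range, degree_sum_fin_lt]), ?_⟩
  have hterm : ∀ i ∈ Finset.range n,
      monomial (n - i) (c i) * monomial 1 r ^ i = monomial n (c i * r ^ i) := by
    intro i hi
    rw [monomial_pow, monomial_mul_monomial, one_mul,
      Nat.sub_add_cancel (Finset.mem_range.mp hi).le]
  simp only [eval₂_add, eval₂_X_pow, eval₂_finsetSum, eval₂_mul, eval₂_C,
    Subalgebra.algebraMap_eq, RingHom.coe_comp, Function.comp_apply, Algebra.algebraMap_self,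
    RingHom.id_apply, RingHom.coe_coe, Subalgebra.coe_val]
  rw [Finset.sum_congr rfl hterm, monomial_pow, one_mul, ← map_sum, ← map_add, heq, map_zero]

lemma mem_intClosure_of_isIntegral_monomial {r : R}
    (hr : IsIntegral (reesAlgebra I) (monomial 1 r)) : r ∈ I.intClosure := by
  obtain ⟨q, hq, heval⟩ := hr
  set n := q.natDegree
  -- `c i * r ^ i` is the coefficient of `X ^ n` in the `i`-th term of `q (r X) = 0`
  set c : ℕ → R := fun i => (q.coeff i : R[X]).coeff (n - i)
  have hterm : ∀ i ∈ Finset.range (n + 1),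
      ((q.coeff i : R[X]) * monomial i (r ^ i)).coeff n = c i * r ^ i := by
    intro i hi
    rw [← coeff_mul_monomial _ i (n - i),
      Nat.sub_add_cancel (Nat.lt_succ_iff.mp (Finset.mem_range.mp hi))]
  have hlead : c n = 1 := by simp [c, n, hq.coeff_natDegree]
  have hsum : r ^ n + ∑ i ∈ Finset.range n, c i * r ^ i = 0 := by
    rw [add_comm, ← one_mul (r ^ n), ← hlead, ← Finset.sum_range_succ,
      ← Finset.sum_congr rfl hterm]
    simpa [eval₂_eq_sum_range, finsetSum_coeff, monomial_pow] using congrArg (coeff · n) heval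
  rcases Nat.eq_zero_or_pos n with hn | hn
  · have : Subsingleton R := subsingleton_of_zero_eq_one (by simpa [hn] using hsum.symm)
    exact ⟨1, one_pos, 0, fun _ _ => zero_mem _, Subsingleton.elim _ _⟩
  · exact ⟨n, hn, c, fun i _ => (q.coeff i).2 (n - i), hsum⟩

noncomputable def intClosureIdeal : Ideal R :=
  ((integralClosure (reesAlgebra I) R[X]).toSubmodule.restrictScalars R).comap (monomial 1)

lemma mem_intClosureIdeal {r : R} : r ∈ I.intClosureIdeal ↔ r ∈ I.intClosure :=
  ⟨I.mem_intClosure_of_isIntegral_monomial, I.isIntegral_monomial_of_mem_intClosure⟩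

lemma le_intClosureIdeal : I ≤ I.intClosureIdeal := fun _ hr =>
  isIntegral_algebraMap
    (x := (⟨_, reesAlgebra.monomial_mem.mpr (by rwa [pow_one])⟩ : reesAlgebra I))

lemma map_mem_intClosure_map {S : Type*} [CommRing S] (f : R →+* S) {r : R}
    (hr : r ∈ I.intClosure) : f r ∈ (I.map f).intClosure := by
  obtain ⟨n, hn, c, hc, heq⟩ := hr
  refine ⟨n, hn, fun i => f (c i), fun i hi => ?_, ?_⟩
  · rw [← Ideal.map_pow]
    exact Ideal.mem_map_of_mem f (hc i hi)
  · simpa using congrArg f heq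

end ReesAlgebra

section Contraction

attribute [local instance] Polynomial.algebra

variable {R S : Type*} [CommRing R] [CommRing S] [Algebra R S] [Algebra.IsIntegral R S]
  (I : Ideal R)

lemma isIntegral_of_mem_reesAlgebra_map {p : S[X]}
    (hp : p ∈ reesAlgebra (I.map (algebraMap R S))) : IsIntegral (reesAlgebra I) p := by
  have hC (s : S) : IsIntegral (reesAlgebra I) (C s : S[X]) :=
    ((Algebra.IsIntegral.isIntegral (R := R) s).algebraMap (B := S[X])).tower_top
  have hmonomial (j : ℕ) {b : S} (hb : b ∈ (I ^ j).map (algebraMap R S)) :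
      IsIntegral (reesAlgebra I) (monomial j b) := by
    induction hb using Submodule.span_induction with
    | mem _ h =>
      obtain ⟨a, ha, rfl⟩ := h
      have : algebraMap (reesAlgebra I) S[X] ⟨monomial j a, reesAlgebra.monomial_mem.mpr ha⟩ =
          monomial j (algebraMap R S a) := map_monomial _
      exact this ▸ isIntegral_algebraMap
    | zero => simpa using isIntegral_zero
    | add _ _ _ _ h₁ h₂ => simpa using h₁.add h₂
    | smul s _ _ h => simpa [← C_mul_monomial] using (hC s).mul h
  rw [p.as_sum_support]
  exact IsIntegral.sum _ fun j _ => hmonomial j (by rw [Ideal.map_pow]; exact hp j)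

lemma mem_intClosure_of_algebraMap_mem (hinj : Function.Injective (algebraMap R S)) {r : R}
    (hr : algebraMap R S r ∈ (I.map (algebraMap R S)).intClosure) : r ∈ I.intClosure := by
  refine I.mem_intClosure_of_isIntegral_monomial ?_
  have hint : IsIntegral (reesAlgebra I) (algebraMap R[X] S[X] (monomial 1 r)) := by
    rw [algebraMap_def, coe_mapRingHom, map_monomial]
    exact isIntegral_trans_of_subalgebra _ (fun _ => I.isIntegral_of_mem_reesAlgebra_map)
      (isIntegral_monomial_of_mem_intClosure _ hr)
  exact (isIntegral_algHom_iff (IsScalarTower.toAlgHom (reesAlgebra I) R[X] S[X])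
    (map_injective _ hinj)).mp hint

end Contraction

section Descent

variable {R : Type*} [CommRing R] (J : Ideal R)

lemma mul_mem_intClosure_of_mul_eq_zero {n : ℕ} (hn : 0 < n) {e : ℕ → R}
    (he : ∀ i < n, e i ∈ J ^ (n - i)) {w z : R}
    (h : w * (z ^ n + ∑ i ∈ Finset.range n, e i * z ^ i) = 0) : w * z ∈ J.intClosure :=
  ⟨n, hn, fun i => e i * w ^ (n - i), fun i hi => mul_mem_right _ _ (he i hi), by
    rw [mul_pow_add_sum_eq_pow_mul, ← pow_sub_one_mul hn.ne', mul_assoc, h, mul_zero]⟩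

lemma exists_mul_mem_intClosure_of_algebraMap_mem {S : Type*} [CommRing S] [Algebra R S]
    (M : Submonoid R) [IsLocalization M S] {y : R}
    (hy : algebraMap R S y ∈ (J.map (algebraMap R S)).intClosure) :
    ∃ t ∈ M, t * y ∈ J.intClosure := by
  obtain ⟨n, hn, c, hc, heq⟩ := hy
  -- with a common denominator `s` of the `c i`, the element `s * y` satisfies an equation with
  -- coefficients `e i ∈ J ^ (n - i)` after multiplication by some `w ∈ M`
  obtain ⟨s, hs, hsc⟩ := IsLocalization.exists_mul_eq_algebraMap_of_forall_mem_map M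
    (fun i => J ^ (n - i)) c n fun i hi => by simpa [Ideal.map_pow] using hc i hi
  choose! a haJ hac using hsc
  set e : ℕ → R := fun i => a i * s ^ (n - i - 1)
  have he : ∀ i < n, e i ∈ J ^ (n - i) := fun i hi => mul_mem_right _ _ (haJ i hi)
  have hce : ∀ i ∈ Finset.range n,
      algebraMap R S (e i) = c i * algebraMap R S s ^ (n - i) := fun i hi => by
    rw [map_mul, map_pow, ← hac i (Finset.mem_range.mp hi),
      ← pow_sub_one_mul (Nat.sub_ne_zero_of_lt (Finset.mem_range.mp hi))]
    ring
  have hzero : algebraMap R S ((s * y) ^ n + ∑ i ∈ Finset.range n, e i * (s * y) ^ i) = 0 := by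
    calc _ = (algebraMap R S s * algebraMap R S y) ^ n + ∑ i ∈ Finset.range n,
            c i * algebraMap R S s ^ (n - i) * (algebraMap R S s * algebraMap R S y) ^ i := by
          rw [map_add, map_pow, map_sum, map_mul]
          refine congrArg _ (Finset.sum_congr rfl fun i hi => ?_)
          rw [map_mul, hce i hi, map_pow, map_mul]
      _ = 0 := by rw [mul_pow_add_sum_eq_pow_mul, heq, mul_zero]
  obtain ⟨⟨w, hw⟩, hwe⟩ := (IsLocalization.map_eq_zero_iff M S _).mp hzero
  refine ⟨w * s, M.mul_mem hw hs, ?_⟩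
  rw [mul_assoc]
  exact J.mul_mem_intClosure_of_mul_eq_zero hn he hwe

lemma mem_intClosure_of_forall_isMaximal {y : R}
    (hy : ∀ (m : Ideal R) [m.IsMaximal], algebraMap R (Localization.AtPrime m) y ∈
      (J.map (algebraMap R (Localization.AtPrime m))).intClosure) :
    y ∈ J.intClosure := by
  by_contra hyJ
  have hcolon : J.intClosureIdeal.colon {y} ≠ ⊤ := fun htop =>
    hyJ <| J.mem_intClosureIdeal.mp <| by simpa using (eq_top_iff_one _).mp htop
  obtain ⟨m, hm, hle⟩ := exists_le_maximal _ hcolon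
  obtain ⟨t, ht, hty⟩ := J.exists_mul_mem_intClosure_of_algebraMap_mem m.primeCompl (hy m)
  exact ht (hle (Submodule.mem_colon_singleton.mpr (J.mem_intClosureIdeal.mpr hty)))

lemma mem_intClosure_of_mk_mem {x : R} (hx : x ∈ J)
    (hJ : Quotient.mk (span {x}) '' J.intClosure = (J.map (Quotient.mk (span {x}))).intClosure)
    {y : R} (hy : Quotient.mk (span {x}) y ∈ (J.map (Quotient.mk (span {x}))).intClosure) :
    y ∈ J.intClosure := by
  obtain ⟨s, hs, hsy⟩ := hJ ▸ hy
  have hys : y - s ∈ J := (span_le.mpr (Set.singleton_subset_iff.mpr hx))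
    (Quotient.eq.mp hsy.symm)
  rw [← mem_intClosureIdeal, ← sub_add_cancel y s]
  exact add_mem (J.le_intClosureIdeal hys) (J.mem_intClosureIdeal.mpr hs)

lemma map_mem_intClosure_map_of_mk_mem {T : Type*} [CommRing T] (φ : R →+* T) {x : R}
    (hx : x ∈ J)
    (hT : Quotient.mk (span {φ x}) '' (J.map φ).intClosure =
      ((J.map φ).map (Quotient.mk (span {φ x}))).intClosure)
    {r : R} (hr : Quotient.mk (span {x}) r ∈ (J.map (Quotient.mk (span {x}))).intClosure) :
    φ r ∈ (J.map φ).intClosure := by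
  refine (J.map φ).mem_intClosure_of_mk_mem (mem_map_of_mem φ hx) hT ?_
  have hxφ : span {x} ≤ (span {φ x}).comap φ :=
    span_le.mpr (Set.singleton_subset_iff.mpr (subset_span rfl))
  have := (J.map (Quotient.mk (span {x}))).map_mem_intClosure_map (quotientMap _ φ hxφ) hr
  rwa [map_map, quotientMap_comp_mk, ← map_map, quotientMap_mk] at this

end Descent

end Ideal

theorem specialization_intClosure_of_norm_general
    (R : Type*) [CommRing R]
    (I : Ideal R) (x : R) (hx : x ∈ I)
    (h : ∀ (m : Ideal (integralClosure R (FractionRing R))) (hm : m.IsMaximal),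
      letI φ := (algebraMap (integralClosure R (FractionRing R))
          (Localization (@Ideal.primeCompl _ _ m hm.isPrime))).comp
          (algebraMap R (integralClosure R (FractionRing R)))
      letI := Ideal.Quotient.commRing (Ideal.span {φ x})
      (Ideal.Quotient.mk (Ideal.span {φ x})) '' (I.map φ).intClosure =
        ((I.map φ).map (Ideal.Quotient.mk (Ideal.span {φ x}))).intClosure) :
    (Ideal.Quotient.mk (Ideal.span {x})) '' I.intClosure =
      (I.map (Ideal.Quotient.mk (Ideal.span {x}))).intClosure := by
  refine Set.Subset.antisymm (Set.image_subset_iff.mpr fun r => I.map_mem_intClosure_map _) ?_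
  intro y hy
  obtain ⟨r, rfl⟩ := Ideal.Quotient.mk_surjective y
  have hinj : Function.Injective (algebraMap R (integralClosure R (FractionRing R))) :=
    .of_comp (f := algebraMap _ (FractionRing R)) <| by
      rw [← RingHom.coe_comp, ← IsScalarTower.algebraMap_eq]
      exact IsFractionRing.injective R _
  refine ⟨r, I.mem_intClosure_of_algebraMap_mem hinj ?_, rfl⟩
  refine Ideal.mem_intClosure_of_forall_isMaximal _ fun m hm => ?_
  have hlocal := I.map_mem_intClosure_map_of_mk_mem (T := Localization.AtPrime m)
    ((algebraMap (integralClosure R (FractionRing R)) (Localization.AtPrime m)).comp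
      (algebraMap R (integralClosure R (FractionRing R)))) hx ?hT hy
  · rw [Ideal.map_map]
    exact hlocal
  case hT => exact h m hm

/-- **Lemma (reduction to the normal case).**  Let `R` be a reduced Noetherian algebra over
an infinite field `k`, `I` an ideal of `R` and `x ∈ I`.  Write `R̄` for the integral closure
of `R` in its total ring of quotients.  If for every maximal ideal `m` of `R̄` the extension
of `\overline{I·R̄_m}` to `R̄_m/(x)R̄_m` equals the integral closure of the extension of `I`
to `R̄_m/(x)R̄_m`, then the image of `\overline{I}` in `R/(x)` equals the integral closure
of the image ideal `I·(R/(x))`. -/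
theorem specialization_intClosure_of_norm (k : Type*) [Field k] [Infinite k]
    (R : Type*) [CommRing R] [IsNoetherianRing R] [IsReduced R] [Algebra k R]
    (I : Ideal R) (x : R) (hx : x ∈ I)
    (h : ∀ (m : Ideal (integralClosure R (FractionRing R))) (hm : m.IsMaximal),
      letI φ := (algebraMap (integralClosure R (FractionRing R))
          (Localization (@Ideal.primeCompl _ _ m hm.isPrime))).comp
          (algebraMap R (integralClosure R (FractionRing R)))
      letI := Ideal.Quotient.commRing (Ideal.span {φ x})
      (Ideal.Quotient.mk (Ideal.span {φ x})) '' (I.map φ).intClosure =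
        ((I.map φ).map (Ideal.Quotient.mk (Ideal.span {φ x}))).intClosure) :
    (Ideal.Quotient.mk (Ideal.span {x})) '' I.intClosure =
      (I.map (Ideal.Quotient.mk (Ideal.span {x}))).intClosure :=
  specialization_intClosure_of_norm_general R I x hx h
end

section
/- Let R = ℚ[t]_{(t)} be the localization of the polynomial ring ℚ[t] at the prime ideal (t), and let I = (t²). Then for any generator x of I (in particular for a general element x of I, since any such element is a unit multiple of t²), the image of the integral closure \overline{I} in R/(x) is the zero ideal, while the residue class of t lies in the integral closure of the zero ideal of R/(x); hence \overline{I}/(x) ⊊ \overline{I/(x)}. In particular, the hypothesis height I ≥ 2 in the main theorem cannot be dropped: specialization by a general element is not compatible with integral closure for this height-1 ideal. -/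
instance : (Ideal.span {(Polynomial.X : Polynomial ℚ)}).IsPrime :=
  (Ideal.span_singleton_prime Polynomial.X_ne_zero).mpr Polynomial.prime_X

/-!
`R = ℚ[t]_(t)` is a discrete valuation ring with uniformizer `t`, and in a DVR the ideals
`(ϖ ^ m)` are integrally closed: if `r = u ϖ ^ k` with `k < m` satisfied an equation of
integral dependence over `(ϖ ^ m)`, every lower term `c i r ^ i` would be divisible by
`ϖ ^ (m (n - i) + k i)`, hence by `ϖ ^ (k n + 1)`, while `r ^ n` is not. So `\overline{I} = I`
maps to zero in `R/(x) = R/(t²)`, whereas the class of `t` is a nonzero nilpotent, and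
nilpotents are integral over every ideal.
-/

namespace Ideal

variable {R : Type*} [CommRing R]

theorem mem_intClosure_of_isNilpotent (I : Ideal R) {r : R} (hr : IsNilpotent r) :
    r ∈ I.intClosure := by
  obtain ⟨n, hn⟩ := hr
  refine ⟨n + 1, n.succ_pos, 0, fun i _ => zero_mem _, ?_⟩
  simp [pow_succ, hn]

theorem zero_mem_intClosure (I : Ideal R) : (0 : R) ∈ I.intClosure :=
  I.mem_intClosure_of_isNilpotent IsNilpotent.zero

theorem exists_pow_dvd_pow_of_mem_intClosure_span_pow {ϖ r : R} {k m : ℕ} (hkm : k < m)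
    (hk : ϖ ^ k ∣ r) (hr : r ∈ (span {ϖ ^ m}).intClosure) :
    ∃ n, 0 < n ∧ ϖ ^ (k * n + 1) ∣ r ^ n := by
  obtain ⟨n, hn, c, hc, heq⟩ := hr
  refine ⟨n, hn, ?_⟩
  rw [eq_neg_of_add_eq_zero_left heq, dvd_neg]
  refine Finset.dvd_sum fun i hi => ?_
  have hi : i < n := Finset.mem_range.mp hi
  have hci : ϖ ^ (m * (n - i)) ∣ c i := by
    simpa only [span_singleton_pow, mem_span_singleton, ← pow_mul] using hc i hi
  have hri : ϖ ^ (k * i) ∣ r ^ i := by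
    rw [pow_mul]
    exact pow_dvd_pow_of_dvd hk i
  have hexp : k * n + 1 ≤ m * (n - i) + k * i := by
    obtain ⟨j, rfl⟩ := Nat.exists_eq_add_of_lt hi
    rw [show i + j + 1 - i = j + 1 by omega]
    nlinarith
  exact (pow_dvd_pow ϖ hexp).trans (by rw [pow_add]; exact mul_dvd_mul hci hri)

end Ideal

namespace IsDiscreteValuationRing

variable {R : Type*} [CommRing R] [IsDomain R] [IsDiscreteValuationRing R]

theorem intClosure_span_pow_subset {ϖ : R} (hϖ : Irreducible ϖ) (m : ℕ) :
    (Ideal.span {ϖ ^ m}).intClosure ⊆ Ideal.span {ϖ ^ m} := by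
  intro r hr
  rcases eq_or_ne r 0 with rfl | hr0
  · exact zero_mem _
  obtain ⟨k, u, rfl⟩ := eq_unit_mul_pow_irreducible hr0 hϖ
  rw [SetLike.mem_coe, Ideal.mem_span_singleton]
  by_contra hdvd
  have hkm : k < m := by
    by_contra! hmk
    exact hdvd (Dvd.dvd.mul_left (pow_dvd_pow ϖ hmk) _)
  obtain ⟨n, -, hn⟩ :=
    Ideal.exists_pow_dvd_pow_of_mem_intClosure_span_pow hkm (Dvd.intro_left _ rfl) hr
  rw [mul_pow, ← pow_mul, pow_succ, mul_comm k, mul_comm (_ ^ n : R)] at hn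
  have hu : ϖ ∣ (u : R) ^ n := (mul_dvd_mul_iff_left (pow_ne_zero _ hϖ.ne_zero)).mp hn
  exact hϖ.not_isUnit (isUnit_of_dvd_unit hu (u.isUnit.pow n))

end IsDiscreteValuationRing

instance : IsDiscreteValuationRing
    (Localization.AtPrime (Ideal.span {(Polynomial.X : Polynomial ℚ)})) :=
  IsLocalization.AtPrime.isDiscreteValuationRing_of_dedekind_domain (Polynomial ℚ)
    (fun h => Polynomial.X_ne_zero (Ideal.span_singleton_eq_bot.mp h)) _

theorem irreducible_algebraMap_X_localizationAtPrime_span_X :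
    Irreducible (algebraMap (Polynomial ℚ)
      (Localization.AtPrime (Ideal.span {(Polynomial.X : Polynomial ℚ)})) Polynomial.X) := by
  rw [IsDiscreteValuationRing.irreducible_iff_uniformizer,
    ← Localization.AtPrime.map_eq_maximalIdeal, Ideal.map_span, Set.image_singleton]

/-- **Example (height 1 is necessary).**  Let `R = ℚ[t]_(t)` and `I = (t²)`.  For any
generator `x` of `I` (in particular for a general element of `I`, which is a unit multiple
of `t²`): the image of the integral closure `\overline{I}` in `R/(x)` is the zero ideal,
while the residue class of `t` is a nonzero element of the integral closure
`\overline{I·(R/(x))}` of the image ideal; hence `\overline{I}/(x) ⊊ \overline{I/(x)}`,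
so specialization by a general element is not compatible with integral closure for this
height-one ideal. -/
theorem intClosure_specialization_counterexample :
    ∀ x : Localization.AtPrime (Ideal.span {(Polynomial.X : Polynomial ℚ)}),
      Ideal.span {x} =
        Ideal.span {(algebraMap (Polynomial ℚ)
          (Localization.AtPrime (Ideal.span {(Polynomial.X : Polynomial ℚ)}))
          Polynomial.X) ^ 2} →
      ((Ideal.Quotient.mk (Ideal.span {x})) ''
          (Ideal.span {(algebraMap (Polynomial ℚ)
            (Localization.AtPrime (Ideal.span {(Polynomial.X : Polynomial ℚ)}))
            Polynomial.X) ^ 2}).intClosure = {0}) ∧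
      (Ideal.Quotient.mk (Ideal.span {x})
          (algebraMap (Polynomial ℚ)
            (Localization.AtPrime (Ideal.span {(Polynomial.X : Polynomial ℚ)}))
            Polynomial.X) ∈
        ((Ideal.span {(algebraMap (Polynomial ℚ)
            (Localization.AtPrime (Ideal.span {(Polynomial.X : Polynomial ℚ)}))
            Polynomial.X) ^ 2}).map (Ideal.Quotient.mk (Ideal.span {x}))).intClosure) ∧
      (Ideal.Quotient.mk (Ideal.span {x})
          (algebraMap (Polynomial ℚ)
            (Localization.AtPrime (Ideal.span {(Polynomial.X : Polynomial ℚ)}))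
            Polynomial.X) ≠ 0) ∧
      ((Ideal.Quotient.mk (Ideal.span {x})) ''
          (Ideal.span {(algebraMap (Polynomial ℚ)
            (Localization.AtPrime (Ideal.span {(Polynomial.X : Polynomial ℚ)}))
            Polynomial.X) ^ 2}).intClosure ⊂
        ((Ideal.span {(algebraMap (Polynomial ℚ)
            (Localization.AtPrime (Ideal.span {(Polynomial.X : Polynomial ℚ)}))
            Polynomial.X) ^ 2}).map (Ideal.Quotient.mk (Ideal.span {x}))).intClosure) := by
  intro x hx
  set t := algebraMap (Polynomial ℚ)
    (Localization.AtPrime (Ideal.span {(Polynomial.X : Polynomial ℚ)})) Polynomial.X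
  have ht := irreducible_algebraMap_X_localizationAtPrime_span_X
  have himage : Ideal.Quotient.mk (Ideal.span {x}) '' (Ideal.span {t ^ 2}).intClosure = {0} := by
    refine Set.eq_singleton_iff_unique_mem.mpr ⟨⟨0, Ideal.zero_mem_intClosure _, map_zero _⟩, ?_⟩
    rintro _ ⟨r, hr, rfl⟩
    rw [Ideal.Quotient.eq_zero_iff_mem, hx]
    exact IsDiscreteValuationRing.intClosure_span_pow_subset ht 2 hr
  have hmem : Ideal.Quotient.mk (Ideal.span {x}) t ∈
      ((Ideal.span {t ^ 2}).map (Ideal.Quotient.mk (Ideal.span {x}))).intClosure := by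
    refine Ideal.mem_intClosure_of_isNilpotent _ ⟨2, ?_⟩
    rw [← map_pow, Ideal.Quotient.eq_zero_iff_mem, hx]
    exact Ideal.mem_span_singleton_self _
  have hne : Ideal.Quotient.mk (Ideal.span {x}) t ≠ 0 := by
    rw [Ne, Ideal.Quotient.eq_zero_iff_mem, hx, Ideal.mem_span_singleton, ← pow_one t,
      ← pow_mul, pow_dvd_pow_iff ht.ne_zero ht.not_isUnit]
    norm_num
  refine ⟨himage, hmem, hne, ?_⟩
  rw [himage, Set.ssubset_def]
  exact ⟨Set.singleton_subset_iff.mpr (Ideal.zero_mem_intClosure _), fun h => hne (h hmem)⟩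
end
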